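/- The infinite product $\mathfrak{S}_R = \pi^2 \sigma_0 \prod_p \left(1 + \chi(p) \frac{2p^2 + p\chi(p) - 4p + 2\chi(p)}{p^2(p-1)(p-2)}\right)$, taken over odd primes $p$ (with $\sigma_0 = 2\prod_{p>2}(1-(p-1)^{-2})$), converges and is strictly positive. -/
import Mathlib


def chi (n : ℕ) : ℤ := if n % 4 = 1 then 1 else if n % 4 = 3 then -1 else 0

noncomputable def sigma0 : ℝ :=
  2 * ∏' p : {p : ℕ // p.Prime ∧ 2 < p}, ((1 : ℝ) - 1 / ((p : ℝ) - 1) ^ 2)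

lemma log_abs_bound {x : ℝ} (h : |x| ≤ 1/2) : |Real.log (1 + x)| ≤ 2 * |x| := by
  have h1 : |(-x)| < 1 := by rw [abs_neg]; linarith
  have := Real.abs_log_sub_add_sum_range_le h1 0
  simp only [Finset.range_zero, Finset.sum_empty, zero_add, sub_neg_eq_add, pow_one,
    abs_neg] at this
  have hx1 : (1:ℝ) - |x| ≥ 1/2 := by linarith
  calc |Real.log (1 + x)| ≤ |x| / (1 - |x|) := this
    _ ≤ |x| / (1/2) := by
        apply div_le_div_of_nonneg_left (abs_nonneg x) (by norm_num) hx1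
    _ = 2 * |x| := by ring

lemma multipliable_pos {ι : Type*} (f : ι → ℝ) (hpos : ∀ i, 0 < f i)
    (hlog : Summable fun i => Real.log (f i)) :
    Multipliable f ∧ 0 < ∏' i, f i := by
  have hp : HasProd f (Real.exp (∑' i, Real.log (f i))) := by
    refine (hlog.hasSum.rexp).congr_fun fun i => ?_
    exact (Real.exp_log (hpos i)).symm
  refine ⟨⟨_, hp⟩, ?_⟩
  rw [hp.tprod_eq]
  exact Real.exp_pos _

lemma summable_aux (c : ℝ) :
    Summable (fun p : {p : ℕ // p.Prime ∧ 2 < p} => c / (p : ℝ)^2) := by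
  have h : Summable (fun n : ℕ => c / (n:ℝ)^2) := by
    have := (Real.summable_one_div_nat_pow (p := 2)).mpr (by norm_num)
    have := this.mul_left c
    simpa [div_eq_mul_inv, mul_comm, mul_assoc] using this
  exact h.subtype _

lemma chi_cases (p : ℕ) (hp : p.Prime) (h2 : 2 < p) :
    (chi p = 1 ∧ 5 ≤ p) ∨ (chi p = -1 ∧ p % 4 = 3) := by
  have hodd : p % 2 = 1 := Nat.odd_iff.mp (hp.odd_of_ne_two (by omega))
  have : p % 4 = 1 ∨ p % 4 = 3 := by omega
  rcases this with h | h
  · left; constructor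
    · simp [chi, h]
    · omega
  · right; exact ⟨by simp [chi, h], h⟩

theorem S_R_pos :
    Multipliable (fun p : {p : ℕ // p.Prime ∧ 2 < p} =>
      (1 : ℝ) + (chi p : ℝ) *
        (2 * (p : ℝ) ^ 2 + (p : ℝ) * (chi p : ℝ) - 4 * (p : ℝ) + 2 * (chi p : ℝ)) /
        ((p : ℝ) ^ 2 * ((p : ℝ) - 1) * ((p : ℝ) - 2))) ∧
    0 < Real.pi ^ 2 * sigma0 *
      ∏' p : {p : ℕ // p.Prime ∧ 2 < p},
        ((1 : ℝ) + (chi p : ℝ) *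
          (2 * (p : ℝ) ^ 2 + (p : ℝ) * (chi p : ℝ) - 4 * (p : ℝ) + 2 * (chi p : ℝ)) /
          ((p : ℝ) ^ 2 * ((p : ℝ) - 1) * ((p : ℝ) - 2))) := by
  set S := {p : ℕ // p.Prime ∧ 2 < p}
  set a : S → ℝ := fun p =>
    (chi p : ℝ) * (2 * (p : ℝ) ^ 2 + (p : ℝ) * (chi p : ℝ) - 4 * (p : ℝ) + 2 * (chi p : ℝ)) /
      ((p : ℝ) ^ 2 * ((p : ℝ) - 1) * ((p : ℝ) - 2)) with ha_def
  -- bounds on a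
  have ha : ∀ p : S, |a p| ≤ 8 / (p : ℝ)^2 ∧ |a p| ≤ 1/2 := by
    rintro ⟨p, hp, h2⟩
    have hq3 : (3:ℝ) ≤ (p:ℝ) := by exact_mod_cast h2
    have hq2 : (0:ℝ) < (p:ℝ)^2 := by positivity
    have hD : (0:ℝ) < (p : ℝ) ^ 2 * ((p : ℝ) - 1) * ((p : ℝ) - 2) :=
      mul_pos (mul_pos hq2 (by linarith)) (by linarith)
    rcases chi_cases p hp h2 with ⟨hc, h5⟩ | ⟨hc, _⟩
    · have hq5 : (5:ℝ) ≤ (p:ℝ) := by exact_mod_cast h5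
      simp only [ha_def, hc]
      push_cast
      have key : (1:ℝ) * (2 * (p:ℝ) ^ 2 + (p:ℝ) * 1 - 4 * (p:ℝ) + 2 * 1)
          = 2 * (p:ℝ)^2 - 3 * (p:ℝ) + 2 := by ring
      rw [key]
      have hN0 : (0:ℝ) ≤ 2 * (p:ℝ)^2 - 3 * (p:ℝ) + 2 := by nlinarith
      have hN : 2 * (p:ℝ)^2 - 3 * (p:ℝ) + 2 ≤ 8 * (((p:ℝ) - 1) * ((p:ℝ) - 2)) := by
        nlinarith [sq_nonneg ((p:ℝ) - 5)]
      have hN2 : 2 * (2 * (p:ℝ)^2 - 3 * (p:ℝ) + 2) ≤ (p:ℝ)^2 * ((p:ℝ) - 1) * ((p:ℝ) - 2) := by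
        nlinarith [sq_nonneg ((p:ℝ) - 5)]
      rw [abs_div, abs_of_pos hD, abs_of_nonneg hN0]
      constructor
      · rw [div_le_div_iff₀ hD hq2]
        nlinarith [mul_le_mul_of_nonneg_left hN (le_of_lt hq2)]
      · rw [div_le_iff₀ hD]
        linarith
    · simp only [ha_def, hc]
      push_cast
      have key : (-1:ℝ) * (2 * (p:ℝ) ^ 2 + (p:ℝ) * (-1) - 4 * (p:ℝ) + 2 * (-1))
          = -(2 * (p:ℝ)^2 - 5 * (p:ℝ) - 2) := by ring
      rw [key]
      have hN0 : (0:ℝ) ≤ 2 * (p:ℝ)^2 - 5 * (p:ℝ) - 2 := by nlinarith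
      have hN : 2 * (p:ℝ)^2 - 5 * (p:ℝ) - 2 ≤ 8 * (((p:ℝ) - 1) * ((p:ℝ) - 2)) := by
        nlinarith [sq_nonneg ((p:ℝ) - 3)]
      have hN2 : 2 * (2 * (p:ℝ)^2 - 5 * (p:ℝ) - 2) ≤ (p:ℝ)^2 * ((p:ℝ) - 1) * ((p:ℝ) - 2) := by
        nlinarith [sq_nonneg ((p:ℝ) - 3)]
      rw [abs_div, abs_of_pos hD, abs_neg, abs_of_nonneg hN0]
      constructor
      · rw [div_le_div_iff₀ hD hq2]
        nlinarith [mul_le_mul_of_nonneg_left hN (le_of_lt hq2)]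
      · rw [div_le_iff₀ hD]
        linarith
  have hpos : ∀ p : S, 0 < 1 + a p := by
    intro p
    have := (ha p).2
    rcases abs_le.1 this with ⟨h1, _⟩
    linarith
  have hlog : Summable (fun p : S => Real.log (1 + a p)) := by
    apply Summable.of_abs
    refine Summable.of_nonneg_of_le (fun _ => abs_nonneg _) (fun p => ?_) (summable_aux 16)
    calc |Real.log (1 + a p)| ≤ 2 * |a p| := log_abs_bound (ha p).2
      _ ≤ 2 * (8 / (p:ℝ)^2) := by
          have := (ha p).1
          linarith
      _ = 16 / (p:ℝ)^2 := by ring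
  obtain ⟨hm, hprod⟩ := multipliable_pos (fun p : S => 1 + a p) hpos hlog
  refine ⟨hm, ?_⟩
  have hsig : 0 < sigma0 := by
    rw [sigma0]
    have hb : ∀ p : S, |(-(1 / ((p:ℝ) - 1)^2))| ≤ 4 / (p:ℝ)^2 ∧
        |(-(1 / ((p:ℝ) - 1)^2))| ≤ 1/2 := by
      rintro ⟨p, hp, h2⟩
      have hq3 : (3:ℝ) ≤ (p:ℝ) := by exact_mod_cast h2
      have h1 : (0:ℝ) < ((p:ℝ) - 1)^2 := by nlinarith
      rw [abs_neg, abs_of_pos (by positivity : (0:ℝ) < 1 / ((p:ℝ)-1)^2)]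
      constructor
      · rw [div_le_div_iff₀ h1 (by positivity)]
        nlinarith
      · rw [div_le_iff₀ h1]
        nlinarith
    have hpos2 : ∀ p : S, 0 < (1 : ℝ) - 1 / ((p : ℝ) - 1) ^ 2 := by
      intro p
      have := (hb p).2
      rcases abs_le.1 this with ⟨h1, _⟩
      linarith
    have hlog2 : Summable (fun p : S => Real.log ((1:ℝ) - 1 / ((p:ℝ) - 1)^2)) := by
      apply Summable.of_abs
      refine Summable.of_nonneg_of_le (fun _ => abs_nonneg _) (fun p => ?_) (summable_aux 8)
      have h1 : ((1:ℝ) - 1 / ((p:ℝ) - 1)^2) = 1 + (-(1 / ((p:ℝ) - 1)^2)) := by ring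
      rw [h1]
      calc |Real.log (1 + (-(1 / ((p:ℝ) - 1)^2)))| ≤ 2 * |(-(1 / ((p:ℝ) - 1)^2))| :=
            log_abs_bound (hb p).2
        _ ≤ 2 * (4 / (p:ℝ)^2) := by
            have := (hb p).1
            linarith
        _ = 8 / (p:ℝ)^2 := by ring
    obtain ⟨_, h⟩ := multipliable_pos _ hpos2 hlog2
    positivity
  have hpi : (0:ℝ) < Real.pi ^ 2 := by positivity
  exact mul_pos (mul_pos hpi hsig) hprod
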